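/- If $X \subseteq \binom{[n]}{k}$ is the set of bases of a matroid of rank $k$ on $[n]$, then any linear extension of the Gale order on $X$ is a shelling order of the associated pure $(k-1)$-dimensional simplicial complex. -/

import Mathlib

/-!
Counting elements below thresholds controls the Gale order: `x ≤ y` as soon as
every initial segment `{1, …, m}` meets `x` at least as often as `y`. Hence trading an element
of a set for a smaller one moves the set down. If `A = L i` comes before `B = L j`, then `B` is
not Gale-below `A`, and the exchange property yields `b ∈ B \ A` and `a < b`, `a ∉ B`, with
`B - b + a` a basis. That basis is Gale-below `B`, so it comes earlier, and it meets `B` in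
`B - b ⊇ A ∩ B`.
-/

/-- Increasing enumeration of a finite set of naturals. -/
def sortedL (x : Finset ℕ) : List ℕ := x.sort (· ≤ ·)

/-- The Gale (Bruhat) order on finite subsets of ℕ: componentwise comparison of
the increasing enumerations. -/
def GaleLE (x y : Finset ℕ) : Prop :=
  ∀ i (hx : i < (sortedL x).length) (hy : i < (sortedL y).length),
    (sortedL x).get ⟨i, hx⟩ ≤ (sortedL y).get ⟨i, hy⟩

def GaleLT (x y : Finset ℕ) : Prop := GaleLE x y ∧ x ≠ y

/-- `C` is a shelling order: for all `i < j` there is `z < j` with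
`|C z ∩ C j| = k - 1` and `C i ∩ C j ⊆ C z ∩ C j`. -/
def IsShellingOrder (k : ℕ) {h : ℕ} (C : Fin h → Finset ℕ) : Prop :=
  ∀ i j : Fin h, i < j → ∃ z : Fin h, z < j ∧
    ((C z ∩ C j).card = k - 1 ∧ C i ∩ C j ⊆ C z ∩ C j)


/-- The (basis) exchange property. -/
def ExchangeProp (X : Set (Finset ℕ)) : Prop :=
  ∀ A ∈ X, ∀ B ∈ X, ∀ a ∈ A \ B, ∃ b ∈ B \ A, (A \ {a}) ∪ {b} ∈ X

open Finset

theorem orderEmbOfFin_le_iff_lt_card_filter {α : Type*} [LinearOrder α] (x : Finset α)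
    (j : Fin #x) (m : α) :
    x.orderEmbOfFin rfl j ≤ m ↔ (j : ℕ) < #{e ∈ x | e ≤ m} := by
  set f := x.orderEmbOfFin rfl
  set below : Finset (Fin #x) := {i | f i ≤ m}
  have hcard : #{e ∈ x | e ≤ m} = #below := by
    conv_lhs => rw [← map_orderEmbOfFin_univ x rfl, filter_map, card_map]
    rfl
  rw [hcard]
  constructor
  · intro hj
    have : Iic j ⊆ below := fun i hi =>
      mem_filter.2 ⟨mem_univ i, (f.monotone (mem_Iic.1 hi)).trans hj⟩
    simpa using (Fin.card_Iic j).symm.trans_le (card_le_card this)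
  · intro hj
    by_contra! hlt
    have : below ⊆ Iio j := fun i hi =>
      mem_Iio.2 (f.lt_iff_lt.1 ((mem_filter.1 hi).2.trans_lt hlt))
    simpa using hj.trans_le ((card_le_card this).trans (Fin.card_Iio j).le)

theorem sortedL_get_le_iff (x : Finset ℕ) {i : ℕ} (hi : i < (sortedL x).length) (m : ℕ) :
    (sortedL x).get ⟨i, hi⟩ ≤ m ↔ i < #{e ∈ x | e ≤ m} := by
  have hi' : i < #x := by simpa [sortedL] using hi
  simpa [sortedL, orderEmbOfFin_apply] using orderEmbOfFin_le_iff_lt_card_filter x ⟨i, hi'⟩ m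

theorem galeLE_of_card_filter_le {x y : Finset ℕ}
    (h : ∀ m, #{e ∈ y | e ≤ m} ≤ #{e ∈ x | e ≤ m}) : GaleLE x y := fun _ hx hy =>
  (sortedL_get_le_iff x hx _).2 (((sortedL_get_le_iff y hy _).1 le_rfl).trans_le (h _))

theorem GaleLE.trans {x y z : Finset ℕ} (hxy : GaleLE x y) (hyz : GaleLE y z) (hc : #x = #y) :
    GaleLE x z := fun i hx hz =>
  have hy : i < (sortedL y).length := by simpa [sortedL, ← hc] using hx
  (hxy i hx hy).trans (hyz i hy hz)

theorem card_filter_le_le_insert_erase {α : Type*} [LinearOrder α] {s : Finset α} {a b : α}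
    (ha : a ∉ s) (hab : a < b) (m : α) :
    #{e ∈ s | e ≤ m} ≤ #{e ∈ insert a (s.erase b) | e ≤ m} := by
  rw [filter_insert, filter_erase]
  split_ifs with ham
  · rw [card_insert_of_notMem (by simp [ha])]
    have := pred_card_le_card_erase (s := {e ∈ s | e ≤ m}) (a := b)
    omega
  · have hb : b ∉ {e ∈ s | e ≤ m} := fun hb => ham (hab.le.trans (mem_filter.1 hb).2)
    rw [erase_eq_of_notMem hb]

theorem galeLT_insert_erase {s : Finset ℕ} {a b : ℕ} (ha : a ∉ s) (hab : a < b) :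
    GaleLT (insert a (s.erase b)) s :=
  ⟨galeLE_of_card_filter_le (card_filter_le_le_insert_erase ha hab),
    fun h => ha (h ▸ mem_insert_self a _)⟩

theorem card_insert_erase {α : Type*} [DecidableEq α] {s : Finset α} {a b : α} (hb : b ∈ s)
    (ha : a ∉ s) :
    #(insert a (s.erase b)) = #s := by
  rw [card_insert_of_notMem (by simp [ha]), card_erase_add_one hb]

theorem ExchangeProp.exists_insert_erase {X : Set (Finset ℕ)} (hX : ExchangeProp X)
    {A B : Finset ℕ} (hA : A ∈ X) (hB : B ∈ X) {a : ℕ} (ha : a ∈ A \ B) :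
    ∃ b ∈ B \ A, insert b (A.erase a) ∈ X := by
  obtain ⟨b, hb, hmem⟩ := hX A hA B hB a ha
  exact ⟨b, hb, by rwa [sdiff_singleton_eq_erase, union_singleton] at hmem⟩

/-- Induction on `#(A \ B)`, looking at the largest element `m` of `A ∆ B`. If `m ∈ B`, exchanging
it out of `B` already works. If `m ∈ A`, exchanging it out of `A` gives a basis `A'` Gale-below
`A`, so still `¬ B < A'`, and `A' \ B = (A \ B) - m`. -/
theorem ExchangeProp.exists_lower_exchange_of_not_galeLT {X : Set (Finset ℕ)}
    (hX : ExchangeProp X) {A B : Finset ℕ} (hA : A ∈ X) (hB : B ∈ X) (hne : A ≠ B)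
    (hcard : #A = #B) (hBA : ¬ GaleLT B A) :
    ∃ b ∈ B \ A, ∃ a ∉ B, a < b ∧ insert a (B.erase b) ∈ X := by
  induction hd : #(A \ B) using Nat.strong_induction_on generalizing A with
  | _ d ih =>
  obtain ⟨m, hm, hmax⟩ : ∃ m ∈ symmDiff A B, ∀ x ∈ symmDiff A B, x ≤ m :=
    have hsymm := symmDiff_nonempty.2 hne
    ⟨_, max'_mem _ hsymm, fun x hx => le_max' _ x hx⟩
  rcases mem_symmDiff.1 hm with ⟨hmA, hmB⟩ | ⟨hmB, hmA⟩
  · have hmAB : m ∈ A \ B := mem_sdiff.2 ⟨hmA, hmB⟩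
    obtain ⟨b', hb', hA'⟩ := hX.exists_insert_erase hA hB hmAB
    obtain ⟨hb'B, hb'A⟩ := mem_sdiff.1 hb'
    have hb'm : b' < m := (hmax b' (mem_symmDiff.2 (Or.inr ⟨hb'B, hb'A⟩))).lt_of_ne
      (ne_of_mem_of_not_mem hb'B hmB)
    set A' := insert b' (A.erase m)
    have hA'A : GaleLT A' A := galeLT_insert_erase hb'A hb'm
    have hcard' : #A' = #A := card_insert_erase hmA hb'A
    have hA'B : A' ≠ B := fun h => hBA (h ▸ hA'A)
    have hBA' : ¬ GaleLT B A' := fun h =>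
      hBA ⟨h.1.trans hA'A.1 (hcard.symm.trans hcard'.symm), hne.symm⟩
    have hlt : #(A' \ B) < d := by
      rw [insert_sdiff_of_mem _ hb'B, erase_sdiff_comm, card_erase_of_mem hmAB]
      have := card_pos.2 ⟨m, hmAB⟩
      omega
    obtain ⟨b, hb, a, haB, hab, hmem⟩ := ih _ hlt hA' hA'B (hcard'.trans hcard) hBA' rfl
    obtain ⟨hbB, hbA'⟩ := mem_sdiff.1 hb
    refine ⟨b, mem_sdiff.2 ⟨hbB, fun hbA => hbA' ?_⟩, a, haB, hab, hmem⟩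
    exact mem_insert_of_mem (mem_erase.2 ⟨ne_of_mem_of_not_mem hbB hmB, hbA⟩)
  · obtain ⟨a, ha, hmem⟩ := hX.exists_insert_erase hB hA (mem_sdiff.2 ⟨hmB, hmA⟩)
    obtain ⟨haA, haB⟩ := mem_sdiff.1 ha
    have ham : a < m := (hmax a (mem_symmDiff.2 (Or.inl ⟨haA, haB⟩))).lt_of_ne
      (ne_of_mem_of_not_mem haA hmA)
    exact ⟨m, mem_sdiff.2 ⟨hmB, hmA⟩, a, haB, ham, hmem⟩

/-- Any linear extension of the Gale order on the set of bases of a matroid of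
rank `k` on `[n]` is a shelling order. -/
theorem matroid_linear_extension_is_shelling
    (n k h : ℕ) (X : Set (Finset ℕ))
    (hX : ∀ x ∈ X, x ⊆ Finset.Icc 1 n ∧ x.card = k)
    (hmatroid : ExchangeProp X)
    (L : Fin h → Finset ℕ)
    (hinj : Function.Injective L)
    (himg : ∀ x, x ∈ X ↔ ∃ i, L i = x)
    (hlin : ∀ i j : Fin h, GaleLT (L i) (L j) → i < j) :
    IsShellingOrder k L := by
  intro i j hij
  have hmem : ∀ i, L i ∈ X := fun i => (himg _).2 ⟨i, rfl⟩
  obtain ⟨b, hb, a, haj, hab, hC⟩ := hmatroid.exists_lower_exchange_of_not_galeLT (hmem i)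
    (hmem j) (hinj.ne hij.ne) ((hX _ (hmem i)).2.trans (hX _ (hmem j)).2.symm)
    (fun h => lt_asymm hij (hlin j i h))
  obtain ⟨hbj, hbi⟩ := mem_sdiff.1 hb
  obtain ⟨z, hz⟩ := (himg _).1 hC
  have hinter : L z ∩ L j = (L j).erase b := by
    rw [hz, insert_inter_of_notMem haj, inter_eq_left.2 (erase_subset b _)]
  refine ⟨z, hlin z j (hz ▸ galeLT_insert_erase haj hab), ?_, ?_⟩
  · rw [hinter, card_erase_of_mem hbj, (hX _ (hmem j)).2]
  · rw [hinter]
    intro x hx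
    exact mem_erase.2 ⟨ne_of_mem_of_not_mem (mem_inter.1 hx).1 hbi, (mem_inter.1 hx).2⟩
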